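/- arXiv:1902.08101 — 3 statements merged into one kernel-verified Lean document; each statement's English description precedes it below -/
import Mathlib

section
/- For complex numbers z1, z2 with |z1| < |z2| and ψ the angle between them (sin ψ ≠ 0), one has 1/|z1+z2|² − 1/|z2|² = (1/|z2|²) · Σ_{n=1}^∞ (−1)^n (|z1|/|z2|)^n · sin((n+1)ψ)/sin(ψ). -/
open Complex Real

theorem stmt_0 (z1 z2 : ℂ) (hz1 : z1 ≠ 0) (hz2 : z2 ≠ 0)
    (h : ‖z1‖ < ‖z2‖)
    (ψ : ℝ) (hψ : ψ = (z1 / z2).arg) (hs : Real.sin ψ ≠ 0) :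
    1 / ‖z1 + z2‖ ^ 2 - 1 / ‖z2‖ ^ 2 =
      (1 / ‖z2‖ ^ 2) *
        ∑' n : ℕ, (-1 : ℝ) ^ (n + 1) * (‖z1‖ / ‖z2‖) ^ (n + 1) *
          (Real.sin ((n + 2) * ψ) / Real.sin ψ) := by
  set w : ℂ := z1 / z2 with hw
  clear_value w
  have hz2' : (0:ℝ) < ‖z2‖ := norm_pos_iff.mpr hz2
  have hw0 : w ≠ 0 := by rw [hw]; exact div_ne_zero hz1 hz2
  have hwabs : (0:ℝ) < ‖w‖ := norm_pos_iff.mpr hw0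
  have hr : ‖w‖ < 1 := by
    rw [hw, norm_div]
    exact div_lt_one hz2' |>.mpr h
  have hwexp : w = (‖w‖ : ℂ) * Complex.exp (ψ * I) := by
    rw [hψ]; exact (Complex.norm_mul_exp_arg_mul_I w).symm
  have him : w.im = ‖w‖ * Real.sin ψ := by
    conv_lhs => rw [hwexp]
    simp [Complex.exp_ofReal_mul_I_im]
  have him0 : w.im ≠ 0 := by
    rw [him]; exact mul_ne_zero (ne_of_gt hwabs) hs
  have h1w : (1 : ℂ) + w ≠ 0 := by
    intro hc
    have : w = -1 := by linear_combination hc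
    rw [this] at hr; simp at hr
  -- the complex series
  set f : ℕ → ℂ := fun n => (-w) ^ n * (-w ^ 2) with hf
  have hnw : ‖-w‖ < 1 := by simpa using hr
  have hsum : Summable f := (summable_geometric_of_norm_lt_one hnw).mul_right _
  have htsumf : ∑' n, f n = (1 + w)⁻¹ * (-w ^ 2) := by
    rw [hf, tsum_mul_right, tsum_geometric_of_norm_lt_one hnw, sub_neg_eq_add]
  -- pointwise identity for the real terms
  have hterm : ∀ n : ℕ,
      (-1 : ℝ) ^ (n + 1) * (‖z1‖ / ‖z2‖) ^ (n + 1) *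
        (Real.sin ((n + 2) * ψ) / Real.sin ψ) = (f n).im / w.im := by
    intro n
    have habsw : ‖z1‖ / ‖z2‖ = ‖w‖ := by
      rw [hw, norm_div]
    have hfn : f n = (-1 : ℝ) ^ (n + 1) *
        ((‖w‖ : ℂ) ^ (n + 2) * Complex.exp (((n + 2 : ℕ) : ℝ) * ψ * I)) := by
      rw [hf]
      have : Complex.exp ((((n + 2 : ℕ) : ℝ) : ℂ) * ψ * I) = Complex.exp (ψ * I) ^ (n + 2) := by
        rw [← Complex.exp_nat_mul]; congr 1; push_cast; ring
      rw [this]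
      conv_lhs => rw [hwexp]
      push_cast
      ring
    have hfim : (f n).im = (-1 : ℝ) ^ (n + 1) *
        (‖w‖ ^ (n + 2) * Real.sin (((n + 2 : ℕ) : ℝ) * ψ)) := by
      rw [hfn]
      have : ((‖w‖ : ℂ) ^ (n + 2) * Complex.exp (((n + 2 : ℕ) : ℝ) * ψ * I)) =
          ((‖w‖ ^ (n + 2) : ℝ) : ℂ) * Complex.exp ((((n + 2 : ℕ) * ψ : ℝ)) * I) := by
        push_cast; ring_nf
      rw [this]
      rw [show ((((-1 : ℝ)) : ℂ) ^ (n + 1) * (((‖w‖ ^ (n + 2) : ℝ)) * Complex.exp ((((n + 2 : ℕ) * ψ : ℝ)) * I))) =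
        ((((-1 : ℝ) ^ (n + 1) * ‖w‖ ^ (n + 2) : ℝ)) * Complex.exp ((((n + 2 : ℕ) * ψ : ℝ)) * I)) by
          push_cast; ring]
      rw [Complex.im_ofReal_mul, Complex.exp_ofReal_mul_I_im]
      ring
    rw [hfim, habsw, him]
    have : ((n : ℝ) + 2) = ((n + 2 : ℕ) : ℝ) := by push_cast; ring
    rw [this]
    field_simp
    ring
  -- rewrite the tsum
  have htsum : ∑' n : ℕ, (-1 : ℝ) ^ (n + 1) * (‖z1‖ / ‖z2‖) ^ (n + 1) *
      (Real.sin ((n + 2) * ψ) / Real.sin ψ) = ((1 + w)⁻¹ * (-w ^ 2)).im / w.im := by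
    rw [tsum_congr hterm, tsum_div_const, ← Complex.im_tsum hsum, htsumf]
  rw [htsum]
  -- abs (z1+z2) = abs z2 * abs (1+w)
  have hz12 : z1 + z2 = z2 * (1 + w) := by
    rw [hw]; field_simp; ring
  have habssum : ‖z1 + z2‖ = ‖z2‖ * ‖1 + w‖ := by
    rw [hz12, norm_mul]
  rw [habssum]
  have hN : ‖1 + w‖ ^ 2 = Complex.normSq (1 + w) := Complex.sq_norm _
  have hNpos : (0:ℝ) < Complex.normSq (1 + w) := Complex.normSq_pos.mpr h1w
  have hinv : ((1 + w)⁻¹ * (-w ^ 2)).im =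
      (-(w.im) * (2 * w.re + w.re ^ 2 + w.im ^ 2)) / Complex.normSq (1 + w) := by
    have hd : (1 + w)⁻¹ * (-w ^ 2) = -w ^ 2 / (1 + w) := by ring
    rw [hd, Complex.div_im]
    have h2i : (-w ^ 2).im = -(2 * w.re * w.im) := by simp [pow_two, Complex.mul_im]; ring
    have h2r : (-w ^ 2).re = -(w.re ^ 2 - w.im ^ 2) := by simp [pow_two, Complex.mul_re]
    rw [h2i, h2r]
    simp only [Complex.add_re, Complex.add_im, Complex.one_re, Complex.one_im]
    have hN0 : Complex.normSq (1 + w) ≠ 0 := ne_of_gt (Complex.normSq_pos.mpr h1w)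
    field_simp
    ring_nf
  rw [hinv]
  have hNval : Complex.normSq (1 + w) = 1 + 2 * w.re + w.re ^ 2 + w.im ^ 2 := by
    simp [Complex.normSq_apply]; ring
  rw [mul_pow, hN]
  rw [hNval]
  have key : (0:ℝ) < 1 + 2 * w.re + w.re ^ 2 + w.im ^ 2 := by rw [← hNval]; exact hNpos
  field_simp [ne_of_gt hz2', him0, ne_of_gt key]
  ring
end

section
/- For x, y ∈ ℝ² with x ≠ 0 and x ≠ y, the pointwise kernel cancellation estimate |x| · | (x₁−y₁)/|x−y|² − x₁/|x|² | ≤ 4|y|/|x−y| holds. -/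
noncomputable abbrev E2 : Type := EuclideanSpace ℝ (Fin 2)

lemma coord_abs_le (v : E2) (i : Fin 2) : |v i| ≤ ‖v‖ := by
  rw [EuclideanSpace.norm_eq]
  simp only [Real.norm_eq_abs, sq_abs]
  rw [← Real.sqrt_sq_eq_abs]
  apply Real.sqrt_le_sqrt
  exact Finset.single_le_sum (f := fun j => v j ^ 2) (fun j _ => sq_nonneg _) (Finset.mem_univ i)

theorem stmt_5 (x y : E2) (hx : x ≠ 0) (hxy : x ≠ y) :
    ‖x‖ * |(x 0 - y 0) / ‖x - y‖ ^ 2 - x 0 / ‖x‖ ^ 2| ≤ 4 * ‖y‖ / ‖x - y‖ := by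
  have hs : (0:ℝ) < ‖x‖ := norm_pos_iff.mpr hx
  have hr : (0:ℝ) < ‖x - y‖ := by rw [norm_pos_iff, sub_ne_zero]; exact hxy
  set s := ‖x‖ with hsdef
  set r := ‖x - y‖ with hrdef
  set a := x 0
  set b := y 0
  have h2 : |a - b| ≤ r := by
    have := coord_abs_le (x - y) 0
    simpa using this
  have h1 : |a| ≤ s := coord_abs_le x 0
  have h3 : |b| ≤ ‖y‖ := coord_abs_le y 0
  have h4 : |s - r| ≤ ‖y‖ := by
    have := abs_norm_sub_norm_le x (x - y)
    simpa using this
  have hy : (0:ℝ) ≤ ‖y‖ := norm_nonneg _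
  -- key estimate
  have key : |s ^ 2 * (a - b) - a * r ^ 2| ≤ 4 * s * ‖y‖ * r := by
    rcases le_total r s with h | h
    · -- E = (a-b)(s²-r²) - b r²
      have e : s ^ 2 * (a - b) - a * r ^ 2 = (a - b) * (s - r) * (s + r) - b * r ^ 2 := by ring
      rw [e]
      calc |(a - b) * (s - r) * (s + r) - b * r ^ 2|
          ≤ |(a - b) * (s - r) * (s + r)| + |b * r ^ 2| := abs_sub _ _
        _ ≤ r * ‖y‖ * (s + r) + ‖y‖ * r ^ 2 := by
            rw [abs_mul, abs_mul, abs_mul]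
            have : |s + r| = s + r := abs_of_nonneg (by positivity)
            rw [this, abs_pow]
            have : |r| = r := abs_of_nonneg hr.le
            rw [this]
            gcongr
        _ ≤ 4 * s * ‖y‖ * r := by
            nlinarith [mul_nonneg (mul_nonneg hy hr.le) (sub_nonneg.mpr h),
              mul_nonneg (mul_nonneg hy hr.le) hs.le]
    · -- E = a(s²-r²) - b s²
      have e : s ^ 2 * (a - b) - a * r ^ 2 = a * (s - r) * (s + r) - b * s ^ 2 := by ring
      rw [e]
      calc |a * (s - r) * (s + r) - b * s ^ 2|
          ≤ |a * (s - r) * (s + r)| + |b * s ^ 2| := abs_sub _ _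
        _ ≤ s * ‖y‖ * (s + r) + ‖y‖ * s ^ 2 := by
            rw [abs_mul, abs_mul, abs_mul]
            have h5 : |s + r| = s + r := abs_of_nonneg (by positivity)
            rw [h5, abs_pow]
            have h6 : |s| = s := abs_of_nonneg hs.le
            rw [h6]
            gcongr
        _ ≤ 4 * s * ‖y‖ * r := by
            nlinarith [mul_nonneg (mul_nonneg hy hs.le) (sub_nonneg.mpr h),
              mul_nonneg (mul_nonneg hy hs.le) hr.le]
  have hne1 : r ^ 2 ≠ 0 := by positivity
  have hne2 : s ^ 2 ≠ 0 := by positivity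
  rw [div_sub_div _ _ hne1 hne2, abs_div]
  rw [abs_of_pos (show (0:ℝ) < r ^ 2 * s ^ 2 by positivity)]
  have eq1 : s * (|(a - b) * s ^ 2 - r ^ 2 * a| / (r ^ 2 * s ^ 2))
      = |(a - b) * s ^ 2 - r ^ 2 * a| / (r ^ 2 * s) := by
    field_simp
  rw [eq1, div_le_div_iff₀ (by positivity) hr]
  have key' : |(a - b) * s ^ 2 - r ^ 2 * a| ≤ 4 * s * ‖y‖ * r := by
    have : (a - b) * s ^ 2 - r ^ 2 * a = s ^ 2 * (a - b) - a * r ^ 2 := by ring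
    rw [this]; exact key
  nlinarith [mul_le_mul_of_nonneg_right key' hr.le]
end

section
/- For x, y ∈ ℝ² with x ≠ y and x ≠ 0, one has | |x|²(x₁−y₁) − x₁|x−y|² | ≤ 4 |x| |y| |x−y|. -/
lemma abs_le_of_sq_le' (u w : ℝ) (hw : 0 ≤ w) (h : u ^ 2 ≤ w ^ 2) : |u| ≤ w := by
  nlinarith [sq_abs u, abs_nonneg u]

lemma key_real (x0 x1 y0 y1 a b c : ℝ) (ha0 : 0 ≤ a) (hb0 : 0 ≤ b) (hc0 : 0 ≤ c)
    (ha : a ^ 2 = x0 ^ 2 + x1 ^ 2) (hb : b ^ 2 = y0 ^ 2 + y1 ^ 2)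
    (hc : c ^ 2 = (x0 - y0) ^ 2 + (x1 - y1) ^ 2) :
    |a ^ 2 * (x0 - y0) - x0 * c ^ 2| ≤ 4 * a * b * c := by
  have hP : a ^ 2 * (x0 - y0) - x0 * c ^ 2 =
      x1 * ((x0 - y0) * y1 - (x1 - y1) * y0) + x0 * ((x0 - y0) * y0 + (x1 - y1) * y1) := by
    rw [ha, hc]; ring
  have hx1 : |x1| ≤ a := abs_le_of_sq_le' _ _ ha0 (by nlinarith [sq_nonneg x0])
  have hx0 : |x0| ≤ a := abs_le_of_sq_le' _ _ ha0 (by nlinarith [sq_nonneg x1])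
  have hcs : ((x0 - y0) * y1 - (x1 - y1) * y0) ^ 2 + ((x0 - y0) * y0 + (x1 - y1) * y1) ^ 2
      = b ^ 2 * c ^ 2 := by rw [hb, hc]; ring
  have hu : |(x0 - y0) * y1 - (x1 - y1) * y0| ≤ b * c :=
    abs_le_of_sq_le' _ _ (mul_nonneg hb0 hc0)
      (by nlinarith [sq_nonneg ((x0 - y0) * y0 + (x1 - y1) * y1)])
  have hv : |(x0 - y0) * y0 + (x1 - y1) * y1| ≤ b * c :=
    abs_le_of_sq_le' _ _ (mul_nonneg hb0 hc0)
      (by nlinarith [sq_nonneg ((x0 - y0) * y1 - (x1 - y1) * y0)])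
  calc |a ^ 2 * (x0 - y0) - x0 * c ^ 2|
      = |x1 * ((x0 - y0) * y1 - (x1 - y1) * y0) + x0 * ((x0 - y0) * y0 + (x1 - y1) * y1)| := by
        rw [hP]
    _ ≤ |x1 * ((x0 - y0) * y1 - (x1 - y1) * y0)| + |x0 * ((x0 - y0) * y0 + (x1 - y1) * y1)| :=
        abs_add_le _ _
    _ = |x1| * |(x0 - y0) * y1 - (x1 - y1) * y0| + |x0| * |(x0 - y0) * y0 + (x1 - y1) * y1| := by
        rw [abs_mul, abs_mul]
    _ ≤ a * (b * c) + a * (b * c) :=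
        add_le_add (mul_le_mul hx1 hu (abs_nonneg _) ha0) (mul_le_mul hx0 hv (abs_nonneg _) ha0)
    _ ≤ 4 * a * b * c := by nlinarith [mul_nonneg ha0 (mul_nonneg hb0 hc0)]

theorem stmt_6 (x y : E2) (hx : x ≠ 0) (hxy : x ≠ y) :
    |‖x‖ ^ 2 * (x 0 - y 0) - x 0 * ‖x - y‖ ^ 2| ≤ 4 * ‖x‖ * ‖y‖ * ‖x - y‖ := by
  have ha : ‖x‖ ^ 2 = x 0 ^ 2 + x 1 ^ 2 := by
    rw [EuclideanSpace.norm_eq, Real.sq_sqrt (by positivity), Fin.sum_univ_two]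
    simp [sq_abs]
  have hb : ‖y‖ ^ 2 = y 0 ^ 2 + y 1 ^ 2 := by
    rw [EuclideanSpace.norm_eq, Real.sq_sqrt (by positivity), Fin.sum_univ_two]
    simp [sq_abs]
  have hc : ‖x - y‖ ^ 2 = (x 0 - y 0) ^ 2 + (x 1 - y 1) ^ 2 := by
    rw [EuclideanSpace.norm_eq, Real.sq_sqrt (by positivity), Fin.sum_univ_two]
    simp [sq_abs]
  exact key_real (x 0) (x 1) (y 0) (y 1) _ _ _ (norm_nonneg _) (norm_nonneg _) (norm_nonneg _)
    ha hb hc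
end
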